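/- Suppose φ: [0,1] → [0,∞) is a continuous non-decreasing function, c > 0, Λ ≥ 0, and φ(T) ≤ cΛ + cΛ e^{c φ(T)} for all T ∈ [0,1]. There exists δ > 0 (depending only on c) such that if Λ ≤ δ and φ(0) < λ where λ = ξ(Λ) is the root near 0 of x = cΛ + cΛ e^{cx}, then φ(T) ≤ λ for all T ∈ [0,1]. -/
import Mathlib


open Set

private lemma exp_sub_le_aux {a b M : ℝ} (hab : a ≤ b) (hb : b ≤ M) :
    Real.exp b - Real.exp a ≤ Real.exp M * (b - a) := by
  have h1 := Real.add_one_le_exp (a - b)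
  have h2 : Real.exp (a - b) * Real.exp b = Real.exp a := by
    rw [← Real.exp_add]; ring_nf
  have h3 : Real.exp b ≤ Real.exp M := Real.exp_le_exp.2 hb
  have h4 := Real.exp_pos b
  nlinarith

private lemma abs_exp_sub_le_aux {a b M : ℝ} (ha : a ≤ M) (hb : b ≤ M) :
    |Real.exp a - Real.exp b| ≤ Real.exp M * |a - b| := by
  rcases le_total a b with h | h
  · rw [abs_sub_comm, abs_of_nonneg (sub_nonneg.2 (Real.exp_le_exp.2 h)),
      abs_sub_comm, abs_of_nonneg (sub_nonneg.2 h)]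
    exact exp_sub_le_aux h hb
  · rw [abs_of_nonneg (sub_nonneg.2 (Real.exp_le_exp.2 h)), abs_of_nonneg (sub_nonneg.2 h)]
    exact exp_sub_le_aux h ha

/-- Bootstrap (continuity) argument: there is a `δ > 0` depending only on `c`, and a
continuous root function `ξ` with `ξ(0) = 0` solving `x = cy + cy e^{cx}` near `0`,
such that any continuous non-decreasing `φ : [0,1] → [0,∞)` satisfying
`φ(T) ≤ cΛ + cΛ e^{cφ(T)}` with `Λ ≤ δ` and `φ(0) < ξ(Λ)` obeys `φ(T) ≤ ξ(Λ)`
for all `T ∈ [0,1]`. -/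
theorem stmt_5 (c : ℝ) (hc : 0 < c) :
    ∃ δ > 0, ∃ ξ : ℝ → ℝ,
      ξ 0 = 0 ∧ ContinuousOn ξ (Icc 0 δ) ∧
      (∀ y ∈ Icc (0 : ℝ) δ, ξ y = c * y + c * y * Real.exp (c * ξ y)) ∧
      ∀ (φ : ℝ → ℝ) (Λ : ℝ),
        ContinuousOn φ (Icc (0 : ℝ) 1) → MonotoneOn φ (Icc (0 : ℝ) 1) →
        (∀ T ∈ Icc (0 : ℝ) 1, 0 ≤ φ T) →
        (∀ T ∈ Icc (0 : ℝ) 1, φ T ≤ c * Λ + c * Λ * Real.exp (c * φ T)) →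
        0 ≤ Λ → Λ ≤ δ → φ 0 < ξ Λ →
        ∀ T ∈ Icc (0 : ℝ) 1, φ T ≤ ξ Λ := by
  have hec : (0:ℝ) < Real.exp c := Real.exp_pos c
  set δ : ℝ := min (1 / (2 * c ^ 2 * Real.exp c)) (1 / (2 * c * (1 + Real.exp c))) with hδdef
  have hδ0 : 0 < δ := by
    apply lt_min <;> positivity
  have hδ1 : δ * (2 * c ^ 2 * Real.exp c) ≤ 1 := by
    have := min_le_left (1 / (2 * c ^ 2 * Real.exp c)) (1 / (2 * c * (1 + Real.exp c)))
    rw [le_div_iff₀ (by positivity)] at this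
    exact this
  have hδ2 : δ * (2 * c * (1 + Real.exp c)) ≤ 1 := by
    have := min_le_right (1 / (2 * c ^ 2 * Real.exp c)) (1 / (2 * c * (1 + Real.exp c)))
    rw [le_div_iff₀ (by positivity)] at this
    exact this
  -- the clamped map
  set G : ℝ → ℝ → ℝ := fun y x => c * max 0 (min y δ) * (1 + Real.exp (c * min x 1)) with hGdef
  have hclamp_mem : ∀ y, 0 ≤ max 0 (min y δ) ∧ max 0 (min y δ) ≤ δ := fun y =>
    ⟨le_max_left _ _, max_le hδ0.le (min_le_right _ _)⟩
  have hG : ∀ y, ContractingWith (1/2 : NNReal) (G y) := by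
    intro y
    constructor
    · rw [← NNReal.coe_lt_coe]; norm_num
    · apply LipschitzWith.of_dist_le_mul
      intro x x'
      rw [Real.dist_eq, Real.dist_eq]
      have h1 : G y x - G y x' =
          c * max 0 (min y δ) * (Real.exp (c * min x 1) - Real.exp (c * min x' 1)) := by
        simp only [hGdef]; ring
      rw [h1, abs_mul]
      have h2 : |Real.exp (c * min x 1) - Real.exp (c * min x' 1)| ≤
          Real.exp c * |c * min x 1 - c * min x' 1| := by
        apply abs_exp_sub_le_aux
        · nlinarith [min_le_right x 1]
        · nlinarith [min_le_right x' 1]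
      have h3 : |c * min x 1 - c * min x' 1| = c * |min x 1 - min x' 1| := by
        rw [← mul_sub, abs_mul, abs_of_pos hc]
      have h4 : |min x 1 - min x' 1| ≤ |x - x'| := by
        have := abs_min_sub_min_le_max x 1 x' 1
        simpa using this
      have h5 : |c * max 0 (min y δ)| = c * max 0 (min y δ) := by
        rw [abs_of_nonneg]; exact mul_nonneg hc.le (hclamp_mem y).1
      have hy2 := (hclamp_mem y).2
      have hy1 := (hclamp_mem y).1
      have habs : (0:ℝ) ≤ |x - x'| := abs_nonneg _
      push_cast
      calc |c * max 0 (min y δ)| * |Real.exp (c * min x 1) - Real.exp (c * min x' 1)|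
          ≤ (c * max 0 (min y δ)) * (Real.exp c * (c * |x - x'|)) := by
            rw [h5]
            apply mul_le_mul_of_nonneg_left _ (mul_nonneg hc.le hy1)
            calc |Real.exp (c * min x 1) - Real.exp (c * min x' 1)|
                ≤ Real.exp c * |c * min x 1 - c * min x' 1| := h2
              _ = Real.exp c * (c * |min x 1 - min x' 1|) := by rw [h3]
              _ ≤ Real.exp c * (c * |x - x'|) := by
                  apply mul_le_mul_of_nonneg_left _ hec.le
                  exact mul_le_mul_of_nonneg_left h4 hc.le
        _ ≤ (1/2) * |x - x'| := by
            have hkey2 : c * max 0 (min y δ) * (Real.exp c * c) ≤ 1/2 := by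
              nlinarith [mul_le_mul_of_nonneg_left hy2
                (show (0:ℝ) ≤ c * (Real.exp c * c) by positivity)]
            calc c * max 0 (min y δ) * (Real.exp c * (c * |x - x'|))
                = (c * max 0 (min y δ) * (Real.exp c * c)) * |x - x'| := by ring
              _ ≤ (1/2) * |x - x'| := mul_le_mul_of_nonneg_right hkey2 habs
  -- the root function
  set ξ : ℝ → ℝ := fun y => ContractingWith.fixedPoint (G y) (hG y) with hξdef
  have hfix : ∀ y, ξ y = c * max 0 (min y δ) * (1 + Real.exp (c * min (ξ y) 1)) :=
    fun y => ((hG y).fixedPoint_isFixedPt).symm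
  -- basic properties on [0, δ]
  have hkey : ∀ y ∈ Icc (0:ℝ) δ,
      ξ y = c * y + c * y * Real.exp (c * ξ y) ∧ 0 ≤ ξ y ∧ ξ y ≤ 1/2 := by
    intro y hy
    have hcl : max 0 (min y δ) = y := by
      rw [min_eq_left hy.2, max_eq_right hy.1]
    have h0 := hfix y
    rw [hcl] at h0
    have hnn : 0 ≤ ξ y := by
      rw [h0]
      have := hy.1
      positivity
    have hle : ξ y ≤ 1/2 := by
      rw [h0]
      have hexp : Real.exp (c * min (ξ y) 1) ≤ Real.exp c := by
        apply Real.exp_le_exp.2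
        nlinarith [min_le_right (ξ y) 1]
      nlinarith [mul_le_mul_of_nonneg_left hexp (mul_nonneg hc.le hy.1),
        mul_le_mul_of_nonneg_right hy.2 (show (0:ℝ) ≤ c * (1 + Real.exp c) by positivity)]
    have hmin : min (ξ y) 1 = ξ y := min_eq_left (by linarith)
    rw [hmin] at h0
    exact ⟨by linear_combination h0, hnn, hle⟩
  -- ξ 0 = 0
  have hξ0 : ξ 0 = 0 := by
    have := (hkey 0 ⟨le_refl 0, hδ0.le⟩).1
    simpa using this
  -- continuity: ξ is Lipschitz
  have hlip : LipschitzWith (2 * c * (1 + Real.exp c)).toNNReal ξ := by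
    apply LipschitzWith.of_dist_le_mul
    intro y y'
    have hC : ∀ z, dist (G y z) (G y' z) ≤ (c * (1 + Real.exp c)) * dist y y' := by
      intro z
      rw [Real.dist_eq, Real.dist_eq]
      have h1 : G y z - G y' z =
          c * (1 + Real.exp (c * min z 1)) * (max 0 (min y δ) - max 0 (min y' δ)) := by
        simp only [hGdef]; ring
      rw [h1, abs_mul]
      have h4 : |max 0 (min y δ) - max 0 (min y' δ)| ≤ |y - y'| := by
        refine (abs_max_sub_max_le_max _ _ _ _).trans
          (max_le (by simp [abs_nonneg]) ?_)
        exact (abs_min_sub_min_le_max _ _ _ _).trans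
          (max_le le_rfl (by simp [abs_nonneg]))
      have hexp : Real.exp (c * min z 1) ≤ Real.exp c := by
        apply Real.exp_le_exp.2
        nlinarith [min_le_right z 1]
      have h5 : |c * (1 + Real.exp (c * min z 1))| ≤ c * (1 + Real.exp c) := by
        rw [abs_of_pos (by positivity)]
        nlinarith
      calc |c * (1 + Real.exp (c * min z 1))| * |max 0 (min y δ) - max 0 (min y' δ)|
          ≤ (c * (1 + Real.exp c)) * |y - y'| :=
            mul_le_mul h5 h4 (abs_nonneg _) (by positivity)
        _ = (c * (1 + Real.exp c)) * dist y y' := by rw [Real.dist_eq]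
    have := (hG y).fixedPoint_lipschitz_in_map (hG y') hC
    have hhalf : (1:ℝ) - ((1:NNReal)/2 : NNReal) = 1/2 := by norm_num
    rw [hhalf] at this
    calc dist (ξ y) (ξ y') ≤ (c * (1 + Real.exp c)) * dist y y' / (1/2) := this
      _ = (2 * c * (1 + Real.exp c)) * dist y y' := by ring
      _ = ((2 * c * (1 + Real.exp c)).toNNReal : ℝ) * dist y y' := by
          rw [Real.coe_toNNReal _ (by positivity)]
  clear_value ξ
  refine ⟨δ, hδ0, ξ, hξ0, (hlip.continuous.continuousOn), fun y hy => (hkey y hy).1, ?_⟩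
  -- the bootstrap part
  intro φ Λ hφc hφm hφnn hφb hΛ0 hΛδ hφ0 T hT
  obtain ⟨heq, hlnn, hlhalf⟩ := hkey Λ ⟨hΛ0, hΛδ⟩
  set lam := ξ Λ with hlamdef
  -- claim: any x ∈ [0,1] with x ≤ cΛ + cΛe^{cx} satisfies x ≤ lam
  have hclaim : ∀ x, 0 ≤ x → x ≤ 1 → x ≤ c * Λ + c * Λ * Real.exp (c * x) → x ≤ lam := by
    intro x hx0 hx1 hxb
    by_contra hxl
    push_neg at hxl
    have hd : Real.exp (c * x) - Real.exp (c * lam) ≤ Real.exp c * (c * x - c * lam) := by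
      apply exp_sub_le_aux
      · nlinarith
      · nlinarith
    have h6 : c * Λ * (Real.exp (c * x) - Real.exp (c * lam)) ≤
        c * Λ * (Real.exp c * (c * x - c * lam)) :=
      mul_le_mul_of_nonneg_left hd (by positivity)
    have h7 : c ^ 2 * Real.exp c * Λ ≤ 1/2 := by
      nlinarith [mul_le_mul_of_nonneg_left hΛδ
        (show (0:ℝ) ≤ c ^ 2 * Real.exp c by positivity)]
    nlinarith [h6, mul_le_mul_of_nonneg_right h7 (by linarith : (0:ℝ) ≤ x - lam)]
  by_contra hcon
  push_neg at hcon
  -- pick intermediate value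
  set v : ℝ := min ((lam + φ T) / 2) ((lam + 1) / 2) with hvdef
  have hv1 : lam < v := by
    apply lt_min <;> linarith
  have hv2 : v ≤ φ T := by
    calc v ≤ (lam + φ T) / 2 := min_le_left _ _
      _ ≤ φ T := by linarith
  have hv3 : v ≤ 1 := by
    calc v ≤ (lam + 1) / 2 := min_le_right _ _
      _ ≤ 1 := by linarith
  have hv0 : 0 ≤ v := le_of_lt (lt_of_le_of_lt hlnn hv1)
  have hsub : Icc (0:ℝ) T ⊆ Icc (0:ℝ) 1 := Icc_subset_Icc le_rfl hT.2
  have hIVT := intermediate_value_Icc hT.1 (hφc.mono hsub)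
  have hvmem : v ∈ Icc (φ 0) (φ T) := ⟨le_of_lt (lt_trans hφ0 hv1), hv2⟩
  obtain ⟨T₂, hT₂, hφT₂⟩ := hIVT hvmem
  have hT₂' : T₂ ∈ Icc (0:ℝ) 1 := hsub hT₂
  have := hφb T₂ hT₂'
  rw [hφT₂] at this
  have := hclaim v hv0 hv3 this
  linarith
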